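/- arXiv:1609.05995 — 3 statements merged into one kernel-verified Lean document; each statement's English description precedes it below -/
import Mathlib

section
/- Let n ≥ 1 and q ≥ 2 be integers. Then N(H(n,q)) = n(q−1): the Hamming graph H(n,q) admits an addressing of length n(q−1), and admits no addressing of length less than n(q−1). -/
/-- The Hamming graph `H(n,q)`: vertices are `n`-tuples over a `q`-letter alphabet, two
tuples being adjacent iff their Hamming distance is `1`. -/
def hammingGraph (n q : ℕ) : SimpleGraph (Fin n → Fin q) where
  Adj x y := hammingDist x y = 1
  symm := ⟨by intro x y h; show hammingDist y x = 1; rw [hammingDist_comm]; exact h⟩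
  loopless := ⟨by intro x h; simp [hammingDist_self] at h⟩

/-- An addressing of length `t` of a graph `G`: each vertex gets a `t`-tuple over a
three-symbol alphabet (`0` = symbol "0", `1` = symbol "a", `2` = symbol "b") such that the
graph distance between any two vertices equals the number of coordinates where one address
has `a` and the other has `b`. -/
def IsAddressing {V : Type*} (G : SimpleGraph V) {t : ℕ} (f : V → Fin t → Fin 3) : Prop :=
  ∀ u v : V, G.dist u v =
    (Finset.univ.filter fun i =>
      (f u i = 1 ∧ f v i = 2) ∨ (f u i = 2 ∧ f v i = 1)).card

/-!
Concatenating, coordinate by coordinate, an addressing of the complete graph `K_q` of length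
`q - 1` gives an addressing of `H(n,q)` of length `n(q-1)`. For `K_q` the letter `c` gets `b` in
position `c - 1`, `a` in the positions `≥ c` and `0` elsewhere, so two distinct letters `c, c'`
clash exactly in position `max c c' - 1`.

The lower bound is the Graham–Pollak argument. An addressing `(aᵢ, bᵢ)ᵢ` of length `t` writes the
distance matrix as `D = ∑ᵢ (aᵢ bᵢᵀ + bᵢ aᵢᵀ)`, so the form `wᵀ D w` vanishes on the common kernel
of the `t` functionals `w ↦ aᵢ ⬝ w`. On the `n(q-1)`-dimensional space of functions
`w x = ∑ₖ gₖ (x k)` with every `gₖ` summing to zero, the Hamming distance form equals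
`-∑ₖ ∑_c (q^(n-1) gₖ c)²`, which is nonzero unless `w = 0`; hence `n(q-1) ≤ t`.
-/

open scoped Finset

section Addressing

variable {ι κ : Type*} [Fintype ι] [Fintype κ]

def addressDist (a b : ι → Fin 3) : ℕ :=
  #{i | (a i = 1 ∧ b i = 2) ∨ (a i = 2 ∧ b i = 1)}

theorem isAddressing_iff {V : Type*} {G : SimpleGraph V} {t : ℕ} {f : V → Fin t → Fin 3} :
    IsAddressing G f ↔ ∀ u v, G.dist u v = addressDist (f u) (f v) :=
  Iff.rfl

theorem addressDist_comp_equiv (e : κ ≃ ι) (a b : ι → Fin 3) :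
    addressDist (a ∘ e) (b ∘ e) = addressDist a b := by
  simp only [addressDist, Finset.card_filter]
  exact e.sum_comp fun i => if (a i = 1 ∧ b i = 2) ∨ (a i = 2 ∧ b i = 1) then 1 else 0

theorem addressDist_uncurry (a b : ι → κ → Fin 3) :
    addressDist (Function.uncurry a) (Function.uncurry b) = ∑ i, addressDist (a i) (b i) := by
  simp only [addressDist, Finset.card_filter]
  exact Fintype.sum_prod_type _

end Addressing

def completeAddress (q : ℕ) (c : Fin q) (j : Fin (q - 1)) : Fin 3 :=
  if (j : ℕ) + 1 = c then 2 else if (c : ℕ) ≤ j then 1 else 0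

theorem isAddressing_completeAddress (q : ℕ) :
    IsAddressing (⊤ : SimpleGraph (Fin q)) (completeAddress q) := by
  intro c c'
  have mismatch_iff (j : Fin (q - 1)) :
      ((completeAddress q c j = 1 ∧ completeAddress q c' j = 2) ∨
        (completeAddress q c j = 2 ∧ completeAddress q c' j = 1)) ↔
      c ≠ c' ∧ (j : ℕ) + 1 = max (c : ℕ) c' := by
    unfold completeAddress
    split_ifs <;> simp_all [Fin.ext_iff] <;> omega
  rw [SimpleGraph.dist_top]
  simp only [mismatch_iff]
  split_ifs with hcc
  · simp [hcc]
  · have hcc' : (c : ℕ) ≠ c' := Fin.val_ne_of_ne hcc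
    refine (Finset.card_eq_one.mpr ⟨⟨max (c : ℕ) c' - 1, by omega⟩, ?_⟩).symm
    ext j
    simp only [Finset.mem_filter, Finset.mem_univ, true_and, Finset.mem_singleton, Fin.ext_iff]
    omega

section Hamming

variable {ι β : Type*} [Fintype ι] [DecidableEq β]

theorem hammingDist_eq_sum_dist_top (x y : ι → β) :
    hammingDist x y = ∑ k, (⊤ : SimpleGraph β).dist (x k) (y k) := by
  simp only [SimpleGraph.dist_top, hammingDist, Finset.card_filter, ite_not]

variable [DecidableEq ι]

theorem hammingDist_update_self {x : ι → β} {i : ι} {b : β}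
    (h : x i ≠ b) : hammingDist x (Function.update x i b) = 1 := by
  rw [hammingDist, Finset.card_eq_one]
  refine ⟨i, Finset.ext fun j => ?_⟩
  rcases eq_or_ne j i with rfl | hji <;> simp [*]

theorem hammingDist_update_add_one {x y : ι → β} {i : ι} (h : x i ≠ y i) :
    hammingDist (Function.update x i (y i)) y + 1 = hammingDist x y := by
  have : ({j | Function.update x i (y i) j ≠ y j} : Finset ι) =
      ({j | x j ≠ y j} : Finset ι).erase i := by
    ext j
    rcases eq_or_ne j i with rfl | hji <;> simp [*]
  rw [hammingDist, hammingDist, this, Finset.card_erase_add_one (by simpa using h)]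

end Hamming

theorem hammingDist_le_length {n q : ℕ} {x y : Fin n → Fin q} (p : (hammingGraph n q).Walk x y) :
    hammingDist x y ≤ p.length := by
  induction p with
  | nil => simp
  | @cons u v w huv p ih =>
    have huv : hammingDist u v = 1 := huv
    have := hammingDist_triangle u v w
    rw [SimpleGraph.Walk.length_cons]
    omega

theorem exists_walk_length_eq_hammingDist {n q : ℕ} (x y : Fin n → Fin q) :
    ∃ p : (hammingGraph n q).Walk x y, p.length = hammingDist x y := by
  induction h : hammingDist x y generalizing x with
  | zero => obtain rfl := hammingDist_eq_zero.mp h; exact ⟨.nil, rfl⟩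
  | succ d ih =>
    obtain ⟨i, hi⟩ : ∃ i, x i ≠ y i := Function.ne_iff.mp (hammingDist_ne_zero.mp (by omega))
    have hadj : (hammingGraph n q).Adj x (Function.update x i (y i)) := hammingDist_update_self hi
    obtain ⟨p, hp⟩ := ih (Function.update x i (y i)) (by have := hammingDist_update_add_one hi; omega)
    exact ⟨.cons hadj p, by simp [hp]⟩

theorem hammingGraph_dist {n q : ℕ} (x y : Fin n → Fin q) :
    (hammingGraph n q).dist x y = hammingDist x y := by
  obtain ⟨p, hp⟩ := exists_walk_length_eq_hammingDist x y
  obtain ⟨p', hp'⟩ := p.reachable.exists_walk_length_eq_dist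
  exact le_antisymm (hp ▸ SimpleGraph.dist_le p) (hp' ▸ hammingDist_le_length p')

theorem IsAddressing.hammingGraph_of_top {n q s : ℕ} {a : Fin q → Fin s → Fin 3}
    (ha : IsAddressing ⊤ a) :
    IsAddressing (hammingGraph n q)
      fun x => Function.uncurry (fun k => a (x k)) ∘ finProdFinEquiv.symm := by
  refine isAddressing_iff.mpr fun u v => ?_
  rw [hammingGraph_dist, addressDist_comp_equiv, addressDist_uncurry, hammingDist_eq_sum_dist_top]
  exact Finset.sum_congr rfl fun k _ => ha (u k) (v k)

section DistForm

variable {𝕜 : Type*} [Field 𝕜] {V : Type*} [Fintype V]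

noncomputable def distForm (G : SimpleGraph V) (w : V → 𝕜) : 𝕜 :=
  ∑ x, ∑ y, w x * w y * G.dist x y

theorem IsAddressing.distForm_eq_zero {G : SimpleGraph V} {t : ℕ} {f : V → Fin t → Fin 3}
    (hf : IsAddressing G f) {w : V → 𝕜} (hw : ∀ i, ∑ x, (if f x i = 1 then w x else 0 : 𝕜) = 0) :
    distForm G w = 0 := by
  set a : Fin 3 → Fin t → V → 𝕜 := fun s i x => if f x i = s then w x else 0
  have hdist (x y : V) : w x * w y * G.dist x y = ∑ i, (a 1 i x * a 2 i y + a 2 i x * a 1 i y) := by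
    rw [hf x y, Finset.natCast_card_filter, Finset.mul_sum]
    refine Finset.sum_congr rfl fun i _ => ?_
    simp only [a]
    generalize f x i = s, f y i = s'
    fin_cases s <;> fin_cases s' <;> simp
  calc distForm G w = ∑ i, ∑ x, ∑ y, (a 1 i x * a 2 i y + a 2 i x * a 1 i y) := by
        simp only [distForm, hdist]
        exact Finset.sum_comm_cycle
    _ = ∑ i, ((∑ x, a 1 i x) * ∑ y, a 2 i y + (∑ x, a 2 i x) * ∑ y, a 1 i y) := by
        simp only [Finset.sum_add_distrib, Finset.sum_mul_sum]
    _ = 0 := by simp [a, hw]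

theorem IsAddressing.finrank_le {G : SimpleGraph V} {t : ℕ} {f : V → Fin t → Fin 3}
    (hf : IsAddressing G f) {E : Type*} [AddCommGroup E] [Module 𝕜 E] [FiniteDimensional 𝕜 E]
    (L : E →ₗ[𝕜] V → 𝕜) (hL : ∀ e ≠ 0, distForm G (L e) ≠ 0) :
    Module.finrank 𝕜 E ≤ t := by
  by_contra! ht
  let A : (V → 𝕜) →ₗ[𝕜] Fin t → 𝕜 :=
    (Matrix.of fun i x => if f x i = 1 then (1 : 𝕜) else 0).mulVecLin
  obtain ⟨e, he, he0⟩ := Submodule.exists_mem_ne_zero_of_ne_bot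
    (LinearMap.ker_ne_bot_of_finrank_lt (f := A ∘ₗ L) (by simpa using ht))
  refine hL e he0 (hf.distForm_eq_zero fun i => ?_)
  simpa [A, Matrix.mulVec, dotProduct] using congrFun he i

end DistForm

section CoordSum

variable {𝕜 ι α : Type*} [Fintype ι]

noncomputable def coordSum [CommSemiring 𝕜] : (ι → α → 𝕜) →ₗ[𝕜] (ι → α) → 𝕜 where
  toFun g x := ∑ i, g i (x i)
  map_add' g h := by ext x; simp [Finset.sum_add_distrib]
  map_smul' c g := by ext x; simp [Finset.mul_sum]

theorem coordSum_apply [CommSemiring 𝕜] (g : ι → α → 𝕜) (x : ι → α) :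
    coordSum g x = ∑ i, g i (x i) :=
  rfl

variable [DecidableEq ι] [Fintype α]

theorem sum_coordSum_eq_zero [CommSemiring 𝕜] {g : ι → α → 𝕜} (hg : ∀ i, ∑ a, g i a = 0) :
    ∑ x, coordSum g x = 0 := by
  simp only [coordSum_apply]
  rw [Finset.sum_comm]
  refine Finset.sum_eq_zero fun i _ => ?_
  have := Fintype.sum_piFinset_apply (g i) Finset.univ i
  rw [Fintype.piFinset_univ] at this
  rw [this, hg i, smul_zero]

variable [DecidableEq α]

theorem sum_sum_mul_hammingDist [CommRing 𝕜] (w : (ι → α) → 𝕜) :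
    ∑ x, ∑ y, w x * w y * (hammingDist x y : 𝕜) =
      ∑ k, ((∑ x, w x) ^ 2 - ∑ c, (∑ x, if x k = c then w x else 0) ^ 2) := by
  set m : ι → α → (ι → α) → 𝕜 := fun k c x => if x k = c then w x else 0
  have hdist (x y : ι → α) :
      w x * w y * (hammingDist x y : 𝕜) = ∑ k, (w x * w y - ∑ c, m k c x * m k c y) := by
    rw [hammingDist, Finset.natCast_card_filter, Finset.mul_sum]
    refine Finset.sum_congr rfl fun k _ => ?_
    by_cases h : x k = y k <;> simp [m, h]
  calc ∑ x, ∑ y, w x * w y * (hammingDist x y : 𝕜)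
      = ∑ k, (∑ x, ∑ y, w x * w y - ∑ c, ∑ x, ∑ y, m k c x * m k c y) := by
        simp only [hdist]
        rw [Finset.sum_comm_cycle]
        refine Finset.sum_congr rfl fun k _ => ?_
        simp only [Finset.sum_sub_distrib]
        rw [Finset.sum_comm_cycle]
    _ = _ := by simp only [sq, Finset.sum_mul_sum, m]

theorem sum_coordSum_fiber [CommSemiring 𝕜] {g : ι → α → 𝕜} (hg : ∀ i, ∑ a, g i a = 0)
    (k : ι) (c : α) :
    ∑ x, (if x k = c then coordSum g x else 0) =
      Fintype.card ({j // j ≠ k} → α) * g k c := by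
  rw [← (Equiv.funSplitAt k α).symm.sum_comp, Fintype.sum_prod_type]
  have hk (c' : α) (y : {j // j ≠ k} → α) : (Equiv.funSplitAt k α).symm (c', y) k = c' := by
    simp [Equiv.funSplitAt_symm_apply]
  have hsplit (y : {j // j ≠ k} → α) : coordSum g ((Equiv.funSplitAt k α).symm (c, y)) =
      g k c + coordSum (fun i : {j // j ≠ k} => g i) y := by
    rw [coordSum_apply, Fintype.sum_eq_add_sum_subtype_ne _ k, hk]
    simp only [coordSum_apply, Equiv.funSplitAt_symm_apply]
    exact congrArg _ (Finset.sum_congr rfl fun i _ => by rw [dif_neg i.2])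
  simp only [hk]
  rw [Fintype.sum_eq_single c fun c' hc' => by simp [hc']]
  simp only [if_pos, hsplit, Finset.sum_add_distrib, Finset.sum_const, Finset.card_univ,
    nsmul_eq_mul]
  rw [sum_coordSum_eq_zero (g := fun i : {j // j ≠ k} => g i) fun i => hg i, add_zero]

theorem sum_sum_mul_hammingDist_coordSum [CommRing 𝕜] {g : ι → α → 𝕜}
    (hg : ∀ i, ∑ a, g i a = 0) :
    ∑ x, ∑ y, coordSum g x * coordSum g y * (hammingDist x y : 𝕜) =
      -∑ k, ∑ c, (Fintype.card ({j // j ≠ k} → α) * g k c) ^ 2 := by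
  simp [sum_sum_mul_hammingDist, sum_coordSum_eq_zero hg, sum_coordSum_fiber hg]

theorem sum_sum_mul_hammingDist_coordSum_neg [CommRing 𝕜] [LinearOrder 𝕜] [IsStrictOrderedRing 𝕜]
    {g : ι → α → 𝕜} (hg : ∀ i, ∑ a, g i a = 0) (hg0 : g ≠ 0) :
    ∑ x, ∑ y, coordSum g x * coordSum g y * (hammingDist x y : 𝕜) < 0 := by
  obtain ⟨k, c, hkc⟩ : ∃ k c, g k c ≠ 0 := by simpa [funext_iff] using hg0
  have : Nonempty α := ⟨c⟩
  rw [sum_sum_mul_hammingDist_coordSum hg, neg_lt_zero]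
  refine Finset.sum_pos' (fun _ _ => Finset.sum_nonneg fun _ _ => sq_nonneg _)
    ⟨k, Finset.mem_univ k, Finset.sum_pos' (fun _ _ => sq_nonneg _) ⟨c, Finset.mem_univ c, ?_⟩⟩
  exact sq_pos_of_ne_zero (mul_ne_zero (by positivity) hkc)

end CoordSum

noncomputable def extendNegSum (𝕜 : Type*) [CommRing 𝕜] (m : ℕ) :
    (Fin m → 𝕜) →ₗ[𝕜] Fin (m + 1) → 𝕜 where
  toFun v := Fin.snoc v (-∑ j, v j)
  map_add' v w := by
    ext j
    refine Fin.lastCases ?_ (fun j => ?_) j <;> simp [Finset.sum_add_distrib, add_comm]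
  map_smul' c v := by
    ext j
    refine Fin.lastCases ?_ (fun j => ?_) j <;> simp [Finset.mul_sum]

theorem sum_extendNegSum {𝕜 : Type*} [CommRing 𝕜] {m : ℕ} (v : Fin m → 𝕜) :
    ∑ j, extendNegSum 𝕜 m v j = 0 := by
  simp [extendNegSum, Fin.sum_univ_castSucc]

theorem extendNegSum_injective {𝕜 : Type*} [CommRing 𝕜] (m : ℕ) :
    Function.Injective (extendNegSum 𝕜 m) := fun v w h =>
  funext fun j => by simpa [extendNegSum] using congrFun h j.castSucc

theorem distForm_hammingGraph {𝕜 : Type*} [Field 𝕜] {n q : ℕ} (w : (Fin n → Fin q) → 𝕜) :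
    distForm (hammingGraph n q) w = ∑ x, ∑ y, w x * w y * (hammingDist x y : 𝕜) := by
  simp only [distForm, hammingGraph_dist]

theorem IsAddressing.mul_sub_one_le_of_hammingGraph {n q t : ℕ}
    {f : (Fin n → Fin q) → Fin t → Fin 3} (hf : IsAddressing (hammingGraph n q) f) :
    n * (q - 1) ≤ t := by
  rcases q with _ | m
  · simp
  have hneg (p : Fin n → Fin m → ℚ) (hp : p ≠ 0) :
      distForm (hammingGraph n (m + 1)) (coordSum (extendNegSum ℚ m ∘ p)) ≠ 0 := by
    rw [distForm_hammingGraph]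
    refine (sum_sum_mul_hammingDist_coordSum_neg (fun i => sum_extendNegSum (p i)) ?_).ne
    exact fun h => hp (funext fun i => extendNegSum_injective m (by simpa using congrFun h i))
  simpa [Module.finrank_pi_fintype] using
    hf.finrank_le (coordSum ∘ₗ (extendNegSum ℚ m).compLeft (Fin n)) hneg

theorem graphN_hamming_general (n q : ℕ) :
    (∃ f : (Fin n → Fin q) → Fin (n * (q - 1)) → Fin 3,
        IsAddressing (hammingGraph n q) f) ∧
      ∀ (t : ℕ) (f : (Fin n → Fin q) → Fin t → Fin 3),
        IsAddressing (hammingGraph n q) f → n * (q - 1) ≤ t :=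
  ⟨⟨_, (isAddressing_completeAddress q).hammingGraph_of_top⟩,
    fun _ _ hf => hf.mul_sub_one_le_of_hammingGraph⟩

/-- For `n ≥ 1` and `q ≥ 2`, `N(H(n,q)) = n(q−1)`: the Hamming graph admits
an addressing of length `n(q−1)` and no shorter one. -/
theorem graphN_hamming (n q : ℕ) (hn : 1 ≤ n) (hq : 2 ≤ q) :
    (∃ f : (Fin n → Fin q) → Fin (n * (q - 1)) → Fin 3,
        IsAddressing (hammingGraph n q) f) ∧
      ∀ (t : ℕ) (f : (Fin n → Fin q) → Fin t → Fin 3),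
        IsAddressing (hammingGraph n q) f → n * (q - 1) ≤ t :=
  graphN_hamming_general n q
end

section
/- The triangular graph T₄ admits no addressing of length 3; hence N(T₄) ≥ 4, so T₄ is not eigensharp (since n₋(D(T₄)) = 3). -/
/-- The triangular graph `Tₙ`, the line graph of `Kₙ`: vertices are the 2-element subsets
of an `n`-element set, adjacent iff they intersect. -/
def triangularGraph (n : ℕ) : SimpleGraph {s : Finset (Fin n) // s.card = 2} where
  Adj a b := a ≠ b ∧ (a.1 ∩ b.1).Nonempty
  symm := by
    constructor
    rintro a b ⟨h1, h2⟩
    exact ⟨h1.symm, by rwa [Finset.inter_comm]⟩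
  loopless := by constructor; rintro a ⟨h1, _⟩; exact h1 rfl

/-- `N(G)`: the minimum length of an addressing of `G`. -/
noncomputable def graphN {V : Type*} (G : SimpleGraph V) : ℕ :=
  sInf {t | ∃ f : V → Fin t → Fin 3, IsAddressing G f}

/-- The distance matrix of a graph `G`, as a real matrix. -/
noncomputable def distMatrix {V : Type*} [Fintype V] (G : SimpleGraph V) : Matrix V V ℝ :=
  Matrix.of fun u v => (G.dist u v : ℝ)

theorem distMatrix_isHermitian {V : Type*} [Fintype V] (G : SimpleGraph V) :
    (distMatrix G).IsHermitian := by
  unfold Matrix.IsHermitian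
  ext u v
  simp [distMatrix, Matrix.conjTranspose_apply, SimpleGraph.dist_comm]

/-- `n₋(M)`: the number of negative eigenvalues, with multiplicity. -/
noncomputable def negCount {V : Type*} [Fintype V] [DecidableEq V] {M : Matrix V V ℝ}
    (hM : M.IsHermitian) : ℕ :=
  (Finset.univ.filter fun i => hM.eigenvalues i < 0).card

namespace T4Aux

abbrev V4 := {s : Finset (Fin 4) // s.card = 2}

instance : DecidableRel (triangularGraph 4).Adj :=
  fun a b => decidable_of_iff (a ≠ b ∧ (a.1 ∩ b.1).Nonempty) Iff.rfl

/-- Explicit enumeration of the six vertices of `T₄`. -/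
def e : Fin 6 → V4 :=
  ![⟨{0,1}, by decide⟩, ⟨{0,2}, by decide⟩, ⟨{0,3}, by decide⟩,
    ⟨{1,2}, by decide⟩, ⟨{1,3}, by decide⟩, ⟨{2,3}, by decide⟩]

lemma e_surj : ∀ v : V4, ∃ i, e i = v := by decide

/-- Distances in `T₄`: `0` on the diagonal, `1` for intersecting pairs, `2` otherwise. -/
lemma dist_char (u v : V4) :
    (triangularGraph 4).dist u v =
      if u = v then 0 else if (u.1 ∩ v.1).Nonempty then 1 else 2 := by
  split_ifs with h1 h2
  · subst h1; exact SimpleGraph.dist_self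
  · exact SimpleGraph.dist_eq_one_iff_adj.mpr ⟨h1, h2⟩
  · obtain ⟨w, hw1, hw2, hw3, hw4⟩ :
        ∃ w : V4, (u.1 ∩ w.1).Nonempty ∧ (w.1 ∩ v.1).Nonempty ∧ u ≠ w ∧ w ≠ v := by
      revert h1 h2; revert u v; decide
    have hadj1 : (triangularGraph 4).Adj u w := ⟨hw3, hw1⟩
    have hadj2 : (triangularGraph 4).Adj w v := ⟨hw4, hw2⟩
    have hle := SimpleGraph.dist_le ((SimpleGraph.Walk.cons hadj1
      (SimpleGraph.Walk.cons hadj2 SimpleGraph.Walk.nil)))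
    simp only [SimpleGraph.Walk.length_cons, SimpleGraph.Walk.length_nil] at hle
    have hr : (triangularGraph 4).Reachable u v :=
      ⟨SimpleGraph.Walk.cons hadj1 (SimpleGraph.Walk.cons hadj2 SimpleGraph.Walk.nil)⟩
    have h0 : 0 < (triangularGraph 4).dist u v := hr.pos_dist_of_ne h1
    have hne1 : (triangularGraph 4).dist u v ≠ 1 := by
      intro h
      exact h2 (SimpleGraph.dist_eq_one_iff_adj.mp h).2
    omega

/-- The distance matrix of `T₄` in the enumeration `e`. -/
def dm (i j : Fin 6) : ℕ := if i = j then 0 else if i.val + j.val = 5 then 2 else 1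

lemma dist_e (i j : Fin 6) : (triangularGraph 4).dist (e i) (e j) = dm i j := by
  rw [dist_char]
  revert i j; decide

/-! ### Part 1: no addressing of length 3 -/

def cl (x y : Fin 3) : ℕ := if (x = 1 ∧ y = 2) ∨ (x = 2 ∧ y = 1) then 1 else 0

lemma clash3 (p q : Fin 3 → Fin 3) :
    (Finset.univ.filter fun i =>
      (p i = 1 ∧ q i = 2) ∨ (p i = 2 ∧ q i = 1)).card
      = cl (p 0) (q 0) + cl (p 1) (q 1) + cl (p 2) (q 2) := by
  rw [Finset.card_filter, Fin.sum_univ_three]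
  simp [cl]

set_option synthInstance.maxSize 4000 in
set_option synthInstance.maxHeartbeats 1000000 in
set_option maxHeartbeats 4000000 in
theorem core : ∀ a1 a2 a3 b1 b2 b3 : Fin 3,
    cl a1 b1 + cl a2 b2 + cl a3 b3 = 2 →
    ∀ c1 c2 c3 : Fin 3,
    cl a1 c1 + cl a2 c2 + cl a3 c3 = 1 →
    cl b1 c1 + cl b2 c2 + cl b3 c3 = 1 →
    ∀ d1 d2 d3 : Fin 3,
    cl a1 d1 + cl a2 d2 + cl a3 d3 = 1 →
    cl b1 d1 + cl b2 d2 + cl b3 d3 = 1 →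
    cl c1 d1 + cl c2 d2 + cl c3 d3 = 2 →
    ∀ e1 e2 e3 : Fin 3,
    cl a1 e1 + cl a2 e2 + cl a3 e3 = 1 →
    cl b1 e1 + cl b2 e2 + cl b3 e3 = 1 →
    cl c1 e1 + cl c2 e2 + cl c3 e3 = 1 →
    cl d1 e1 + cl d2 e2 + cl d3 e3 = 1 →
    ∀ f1 f2 f3 : Fin 3,
    cl a1 f1 + cl a2 f2 + cl a3 f3 = 1 →
    cl b1 f1 + cl b2 f2 + cl b3 f3 = 1 →
    cl c1 f1 + cl c2 f2 + cl c3 f3 = 1 →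
    cl d1 f1 + cl d2 f2 + cl d3 f3 = 1 →
    cl e1 f1 + cl e2 f2 + cl e3 f3 = 2 →
    False := by decide

theorem part1 : ∀ f : V4 → Fin 3 → Fin 3, ¬ IsAddressing (triangularGraph 4) f := by
  intro f h
  have K : ∀ (i j : Fin 6) (n : ℕ), dm i j = n →
      cl (f (e i) 0) (f (e j) 0) + cl (f (e i) 1) (f (e j) 1)
        + cl (f (e i) 2) (f (e j) 2) = n := by
    intro i j n hn
    rw [← clash3, ← h (e i) (e j), dist_e, hn]
  exact core (f (e 0) 0) (f (e 0) 1) (f (e 0) 2) (f (e 5) 0) (f (e 5) 1) (f (e 5) 2)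
    (K 0 5 2 rfl)
    (f (e 1) 0) (f (e 1) 1) (f (e 1) 2) (K 0 1 1 rfl) (K 5 1 1 rfl)
    (f (e 4) 0) (f (e 4) 1) (f (e 4) 2) (K 0 4 1 rfl) (K 5 4 1 rfl) (K 1 4 2 rfl)
    (f (e 2) 0) (f (e 2) 1) (f (e 2) 2) (K 0 2 1 rfl) (K 5 2 1 rfl) (K 1 2 1 rfl) (K 4 2 1 rfl)
    (f (e 3) 0) (f (e 3) 1) (f (e 3) 2) (K 0 3 1 rfl) (K 5 3 1 rfl) (K 1 3 1 rfl) (K 4 3 1 rfl)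
    (K 2 3 2 rfl)

/-! ### Part 2: `4 ≤ N(T₄)` -/

def F6 : Fin 6 → Fin 4 → Fin 3 :=
  ![![0,0,1,1], ![0,0,1,2], ![1,1,2,0], ![2,2,2,0], ![1,2,2,1], ![1,2,2,2]]

def idx : V4 → Fin 6 := fun v =>
  if v = e 0 then 0 else if v = e 1 then 1 else if v = e 2 then 2
  else if v = e 3 then 3 else if v = e 4 then 4 else 5

def f4 : V4 → Fin 4 → Fin 3 := fun v => F6 (idx v)

lemma addr4 : IsAddressing (triangularGraph 4) f4 := by
  intro u v
  obtain ⟨i, rfl⟩ : ∃ i, e i = u := e_surj u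
  obtain ⟨j, rfl⟩ : ∃ j, e j = v := e_surj v
  rw [dist_char]
  revert i j; decide

lemma pad {t : ℕ} {f : V4 → Fin t → Fin 3} (h : IsAddressing (triangularGraph 4) f) :
    IsAddressing (triangularGraph 4) (fun v => Fin.snoc (f v) (0 : Fin 3)) := by
  intro u v
  rw [h u v, Finset.card_filter, Finset.card_filter, Fin.sum_univ_castSucc]
  simp

theorem part2 : 4 ≤ graphN (triangularGraph 4) := by
  have hmem : (4 : ℕ) ∈ {t | ∃ f : V4 → Fin t → Fin 3, IsAddressing (triangularGraph 4) f} :=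
    ⟨f4, addr4⟩
  apply le_csInf ⟨4, hmem⟩
  rintro t ⟨f, hf⟩
  by_contra hlt
  push_neg at hlt
  interval_cases t
  · exact part1 _ (pad (pad (pad hf)))
  · exact part1 _ (pad (pad hf))
  · exact part1 _ (pad hf)
  · exact part1 _ hf

/-! ### Part 3: `n₋(D(T₄)) = 3` -/

local notation "hM" => distMatrix_isHermitian (triangularGraph 4)

def eqv : Fin 6 ≃ V4 where
  toFun := e
  invFun := fun v =>
    if v = e 0 then 0 else if v = e 1 then 1 else if v = e 2 then 2
    else if v = e 3 then 3 else if v = e 4 then 4 else 5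
  left_inv := by decide
  right_inv := by decide

lemma Mentry (i j : Fin 6) : distMatrix (triangularGraph 4) (e i) (e j) = (dm i j : ℝ) := by
  show ((triangularGraph 4).dist (e i) (e j) : ℝ) = _
  rw [dist_e]

lemma key (i : V4) (k : Fin 6) :
    ∑ j : Fin 6, (dm k j : ℝ) * (hM).eigenvectorBasis i (e j)
      = (hM).eigenvalues i * (hM).eigenvectorBasis i (e k) := by
  have h1 : ∑ v : V4, distMatrix (triangularGraph 4) (e k) v * (hM).eigenvectorBasis i v
      = (hM).eigenvalues i * (hM).eigenvectorBasis i (e k) := by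
    have h0 := congrFun ((hM).mulVec_eigenvectorBasis i) (e k)
    rw [Matrix.mulVec, dotProduct] at h0
    simpa using h0
  calc ∑ j : Fin 6, (dm k j : ℝ) * (hM).eigenvectorBasis i (e j)
      = ∑ j : Fin 6, distMatrix (triangularGraph 4) (e k) (e j)
          * (hM).eigenvectorBasis i (e j) := by
        refine Finset.sum_congr rfl fun j _ => ?_
        rw [Mentry]
    _ = ∑ v : V4, distMatrix (triangularGraph 4) (e k) v * (hM).eigenvectorBasis i v :=
        Equiv.sum_comp eqv
          (fun v => distMatrix (triangularGraph 4) (e k) v * (hM).eigenvectorBasis i v)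
    _ = _ := h1

lemma dmcast (k j : Fin 6) (n : ℕ) (h : dm k j = n) : ((dm k j : ℕ) : ℝ) = (n : ℝ) := by
  rw [h]

set_option maxHeartbeats 1000000 in
lemma eig_main (i : V4) :
    ((hM).eigenvalues i = -2 ∨ (hM).eigenvalues i = 0 ∨ (hM).eigenvalues i = 6) ∧
      ((hM).eigenvalues i = 6 →
        ∃ c : ℝ, c ≠ 0 ∧ ∀ u : V4, (hM).eigenvectorBasis i u = c) := by
  set L : ℝ := (hM).eigenvalues i with hL
  set x : Fin 6 → ℝ := fun j => (hM).eigenvectorBasis i (e j) with hx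
  have hxr : ∀ j : Fin 6, (hM).eigenvectorBasis i (e j) = x j := fun _ => rfl
  have E0 := key i 0; have E1 := key i 1; have E2 := key i 2
  have E3 := key i 3; have E4 := key i 4; have E5 := key i 5
  rw [Fin.sum_univ_six] at E0 E1 E2 E3 E4 E5
  simp only [hxr] at E0 E1 E2 E3 E4 E5
  rw [dmcast 0 0 0 rfl, dmcast 0 1 1 rfl, dmcast 0 2 1 rfl, dmcast 0 3 1 rfl,
    dmcast 0 4 1 rfl, dmcast 0 5 2 rfl] at E0
  rw [dmcast 1 0 1 rfl, dmcast 1 1 0 rfl, dmcast 1 2 1 rfl, dmcast 1 3 1 rfl,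
    dmcast 1 4 2 rfl, dmcast 1 5 1 rfl] at E1
  rw [dmcast 2 0 1 rfl, dmcast 2 1 1 rfl, dmcast 2 2 0 rfl, dmcast 2 3 2 rfl,
    dmcast 2 4 1 rfl, dmcast 2 5 1 rfl] at E2
  rw [dmcast 3 0 1 rfl, dmcast 3 1 1 rfl, dmcast 3 2 2 rfl, dmcast 3 3 0 rfl,
    dmcast 3 4 1 rfl, dmcast 3 5 1 rfl] at E3
  rw [dmcast 4 0 1 rfl, dmcast 4 1 2 rfl, dmcast 4 2 1 rfl, dmcast 4 3 1 rfl,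
    dmcast 4 4 0 rfl, dmcast 4 5 1 rfl] at E4
  rw [dmcast 5 0 2 rfl, dmcast 5 1 1 rfl, dmcast 5 2 1 rfl, dmcast 5 3 1 rfl,
    dmcast 5 4 1 rfl, dmcast 5 5 0 rfl] at E5
  push_cast at E0 E1 E2 E3 E4 E5
  rw [← hL] at E0 E1 E2 E3 E4 E5
  have hS : (L - 6) * (x 0 + x 1 + x 2 + x 3 + x 4 + x 5) = 0 := by
    linear_combination (-1 : ℝ) * E0 - E1 - E2 - E3 - E4 - E5
  have h05 : (L + 2) * (x 0 - x 5) = 0 := by linear_combination E5 - E0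
  have h14 : (L + 2) * (x 1 - x 4) = 0 := by linear_combination E4 - E1
  have h23 : (L + 2) * (x 2 - x 3) = 0 := by linear_combination E3 - E2
  have p05 : L * (x 0 + x 5) = 2 * (x 0 + x 1 + x 2 + x 3 + x 4 + x 5) := by
    linear_combination -E0 - E5
  have p14 : L * (x 1 + x 4) = 2 * (x 0 + x 1 + x 2 + x 3 + x 4 + x 5) := by
    linear_combination -E1 - E4
  have p23 : L * (x 2 + x 3) = 2 * (x 0 + x 1 + x 2 + x 3 + x 4 + x 5) := by
    linear_combination -E2 - E3
  have hxne : x 0 ≠ 0 ∨ x 1 ≠ 0 ∨ x 2 ≠ 0 ∨ x 3 ≠ 0 ∨ x 4 ≠ 0 ∨ x 5 ≠ 0 := by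
    by_contra hcon
    push_neg at hcon
    obtain ⟨h0, h1, h2, h3, h4, h5⟩ := hcon
    have hz : ∀ u : V4, (hM).eigenvectorBasis i u = 0 := by
      intro u
      obtain ⟨j, rfl⟩ := e_surj u
      fin_cases j
      · exact h0
      · exact h1
      · exact h2
      · exact h3
      · exact h4
      · exact h5
    exact (hM).eigenvectorBasis.orthonormal.ne_zero i (by ext v; exact hz v)
  constructor
  · by_contra hcon
    push_neg at hcon
    obtain ⟨hn2, hn0, hn6⟩ := hcon
    have hSz : x 0 + x 1 + x 2 + x 3 + x 4 + x 5 = 0 := by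
      rcases mul_eq_zero.mp hS with h | h
      · exact absurd (by linarith) hn6
      · exact h
    have q05 : x 0 - x 5 = 0 := by
      rcases mul_eq_zero.mp h05 with h | h
      · exact absurd (by linarith) hn2
      · exact h
    have q14 : x 1 - x 4 = 0 := by
      rcases mul_eq_zero.mp h14 with h | h
      · exact absurd (by linarith) hn2
      · exact h
    have q23 : x 2 - x 3 = 0 := by
      rcases mul_eq_zero.mp h23 with h | h
      · exact absurd (by linarith) hn2
      · exact h
    have r05 : x 0 + x 5 = 0 := by
      rcases mul_eq_zero.mp (show L * (x 0 + x 5) = 0 by rw [p05, hSz]; ring) with h | h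
      · exact absurd h hn0
      · exact h
    have r14 : x 1 + x 4 = 0 := by
      rcases mul_eq_zero.mp (show L * (x 1 + x 4) = 0 by rw [p14, hSz]; ring) with h | h
      · exact absurd h hn0
      · exact h
    have r23 : x 2 + x 3 = 0 := by
      rcases mul_eq_zero.mp (show L * (x 2 + x 3) = 0 by rw [p23, hSz]; ring) with h | h
      · exact absurd h hn0
      · exact h
    rcases hxne with h | h | h | h | h | h <;> exact h (by linarith)
  · intro h6
    have q05 : x 0 = x 5 := by
      rcases mul_eq_zero.mp h05 with h | h
      · rw [h6] at h; norm_num at h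
      · linarith
    have q14 : x 1 = x 4 := by
      rcases mul_eq_zero.mp h14 with h | h
      · rw [h6] at h; norm_num at h
      · linarith
    have q23 : x 2 = x 3 := by
      rcases mul_eq_zero.mp h23 with h | h
      · rw [h6] at h; norm_num at h
      · linarith
    rw [h6] at p05 p14 p23
    have a1 : x 1 = x 0 := by linarith
    have a2 : x 2 = x 0 := by linarith
    have a3 : x 3 = x 0 := by linarith
    have a4 : x 4 = x 0 := by linarith
    have a5 : x 5 = x 0 := by linarith
    have hc0 : x 0 ≠ 0 := by
      rcases hxne with h | h | h | h | h | h <;> intro h0 <;> exact h (by linarith)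
    refine ⟨x 0, hc0, ?_⟩
    intro u
    obtain ⟨j, rfl⟩ := e_surj u
    fin_cases j
    · rfl
    · exact a1
    · exact a2
    · exact a3
    · exact a4
    · exact a5

set_option maxHeartbeats 1000000 in
lemma trace_lam : ∑ i : V4, (hM).eigenvalues i = 0 := by
  have h1 : (distMatrix (triangularGraph 4)).trace = ∑ i, (hM).eigenvalues i := by
    exact (hM).trace_eq_sum_eigenvalues
  rw [← h1]
  simp [Matrix.trace, Matrix.diag, distMatrix, SimpleGraph.dist_self]

set_option maxHeartbeats 1000000 in
theorem part3 : negCount (distMatrix_isHermitian (triangularGraph 4)) = 3 := by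
  classical
  set A := Finset.univ.filter (fun v : V4 => (hM).eigenvalues v = -2) with hA
  set C := Finset.univ.filter (fun v : V4 => (hM).eigenvalues v = 6) with hC
  have h26 : ∀ v : V4, (hM).eigenvalues v = -2 ∨ (hM).eigenvalues v = 0 ∨ (hM).eigenvalues v = 6 :=
    fun v => (eig_main v).1
  have hsplit : ∑ v : V4, (hM).eigenvalues v
      = ∑ v : V4, ((if (hM).eigenvalues v = -2 then (-2 : ℝ) else 0)
          + (if (hM).eigenvalues v = 6 then 6 else 0)) := by
    refine Finset.sum_congr rfl fun v _ => ?_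
    rcases h26 v with h | h | h <;> rw [h] <;> norm_num
  have hcount : (-2 : ℝ) * A.card + 6 * C.card = 0 := by
    have h := trace_lam
    rw [hsplit, Finset.sum_add_distrib, ← Finset.sum_filter, ← Finset.sum_filter,
      Finset.sum_const, Finset.sum_const, ← hA, ← hC] at h
    simp only [nsmul_eq_mul] at h
    linarith
  have hAC : A.card = 3 * C.card := by
    have h : (A.card : ℝ) = 3 * (C.card : ℝ) := by linarith
    exact_mod_cast h
  have hCle : C.card ≤ 1 := by
    by_contra hgt
    push_neg at hgt
    obtain ⟨i, hi, j, hj, hij⟩ := Finset.one_lt_card.mp hgt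
    rw [hC, Finset.mem_filter] at hi hj
    obtain ⟨ci, hci, hciall⟩ := (eig_main i).2 hi.2
    obtain ⟨cj, hcj, hcjall⟩ := (eig_main j).2 hj.2
    have horth : (inner ℝ ((hM).eigenvectorBasis i) ((hM).eigenvectorBasis j) : ℝ) = 0 :=
      (hM).eigenvectorBasis.orthonormal.2 hij
    rw [PiLp.inner_apply] at horth
    simp only [RCLike.inner_apply, starRingEnd_apply, star_trivial] at horth
    rw [Finset.sum_congr rfl (fun v _ => by rw [hciall v, hcjall v])] at horth
    rw [Finset.sum_const] at horth
    have hcard : Fintype.card V4 = 6 := by decide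
    rw [Finset.card_univ, hcard] at horth
    simp only [nsmul_eq_mul, Nat.cast_ofNat] at horth
    exact (mul_ne_zero hci hcj) (by linarith)
  have hCge : 1 ≤ C.card := by
    by_contra hlt
    push_neg at hlt
    have hC0 : C.card = 0 := by omega
    have hA0 : A.card = 0 := by rw [hAC, hC0]
    rw [Finset.card_eq_zero] at hC0 hA0
    have hallz : ∀ v : V4, (hM).eigenvalues v = 0 := by
      intro v
      rcases h26 v with h | h | h
      · exfalso
        have hv : v ∈ A := by rw [hA]; simp [h]
        rw [hA0] at hv
        simp at hv
      · exact h
      · exfalso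
        have hv : v ∈ C := by rw [hC]; simp [h]
        rw [hC0] at hv
        simp at hv
    have hM0 : distMatrix (triangularGraph 4) = 0 := by
      have hsp := (hM).spectral_theorem
      have hz : (RCLike.ofReal ∘ (hM).eigenvalues : V4 → ℝ) = fun _ => 0 := by
        funext v; simp [hallz v]
      rw [hz] at hsp
      simpa using hsp
    have h01 : distMatrix (triangularGraph 4) (e 0) (e 1) = 1 := by
      rw [Mentry]
      norm_num [show dm 0 1 = 1 from rfl]
    rw [hM0] at h01
    simp at h01
  have hC1 : C.card = 1 := le_antisymm hCle hCge
  have hA3 : A.card = 3 := by rw [hAC, hC1]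
  show (Finset.univ.filter fun v => (hM).eigenvalues v < 0).card = 3
  have hfe : (Finset.univ.filter fun v : V4 => (hM).eigenvalues v < 0) = A := by
    rw [hA]
    apply Finset.filter_congr
    intro v _
    rcases h26 v with h | h | h <;> rw [h] <;> norm_num
  rw [hfe, hA3]

end T4Aux

/-- `T₄` admits no addressing of length `3`; hence `N(T₄) ≥ 4`, so `T₄` is
not eigensharp (indeed `n₋(D(T₄)) = 3`). -/
theorem t4_not_eigensharp :
    (∀ f : {s : Finset (Fin 4) // s.card = 2} → Fin 3 → Fin 3,
        ¬ IsAddressing (triangularGraph 4) f) ∧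
      4 ≤ graphN (triangularGraph 4) ∧
      negCount (distMatrix_isHermitian (triangularGraph 4)) = 3 :=
  ⟨T4Aux.part1, T4Aux.part2, T4Aux.part3⟩
end

section
/- The triangular graph T₅ (the complement of the Petersen graph) satisfies 5 ≤ N(T₅) ≤ 6: T₅ admits an addressing of length 6, and admits no addressing of length 4 or less. -/
namespace T5Aux

abbrev V5 := {s : Finset (Fin 5) // s.card = 2}
abbrev A4 := Fin 4 → Fin 3
abbrev T4 := Fin 3 × Fin 3 × Fin 3 × Fin 3

/-- conflict indicator -/
def e (a b : Fin 3) : ℕ := if (a = 1 ∧ b = 2) ∨ (a = 2 ∧ b = 1) then 1 else 0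

def cntT (p q : T4) : ℕ :=
  e p.1 q.1 + e p.2.1 q.2.1 + e p.2.2.1 q.2.2.1 + e p.2.2.2 q.2.2.2

def cnt {t : ℕ} (x y : Fin t → Fin 3) : ℕ :=
  (Finset.univ.filter fun i => (x i = 1 ∧ y i = 2) ∨ (x i = 2 ∧ y i = 1)).card

lemma cnt_eq_sum {t : ℕ} (x y : Fin t → Fin 3) :
    cnt x y = ∑ i, e (x i) (y i) := Finset.card_filter _ _

lemma cnt_eq_cntT (x y : A4) :
    cnt x y = cntT (x 0, x 1, x 2, x 3) (y 0, y 1, y 2, y 3) := by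
  rw [cnt_eq_sum, Fin.sum_univ_four]; rfl

def sw (b : Bool) (a : Fin 3) : Fin 3 :=
  if b then (if a = 1 then 2 else if a = 2 then 1 else 0) else a

lemma e_sw : ∀ (b : Bool) (a c : Fin 3), e (sw b a) (sw b c) = e a c := by decide

lemma cnt_trans (σ : Equiv.Perm (Fin 4)) (tb : Fin 4 → Bool) (x y : A4) :
    cnt (fun i => sw (tb i) (x (σ i))) (fun i => sw (tb i) (y (σ i))) = cnt x y := by
  simp only [cnt_eq_sum, e_sw]
  exact Equiv.sum_comp σ fun i => e (x i) (y i)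

def canonT : List T4 := [(0,0,0,0), (1,0,0,0), (1,1,0,0), (1,1,1,0), (1,1,1,1)]

def pmap (σ : Equiv.Perm (Fin 4)) (tb : Fin 4 → Bool) (x : A4) : T4 :=
  (sw (tb 0) (x (σ 0)), sw (tb 1) (x (σ 1)), sw (tb 2) (x (σ 2)), sw (tb 3) (x (σ 3)))

lemma pmap_cnt (σ : Equiv.Perm (Fin 4)) (tb : Fin 4 → Bool) (x y : A4) :
    cntT (pmap σ tb x) (pmap σ tb y) = cnt x y :=
  (cnt_eq_cntT (fun i => sw (tb i) (x (σ i))) (fun i => sw (tb i) (y (σ i)))).symm.trans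
    (cnt_trans σ tb x y)

set_option maxRecDepth 100000
set_option synthInstance.maxHeartbeats 1000000
set_option synthInstance.maxSize 2048
set_option maxHeartbeats 20000000

lemma canon_ex : ∀ x : A4, ∃ σ : Equiv.Perm (Fin 4), ∃ tb : Fin 4 → Bool,
    pmap σ tb x ∈ canonT := by decide

lemma cnt_pad {t : ℕ} (h : t ≤ 4) (x y : Fin t → Fin 3) :
    cnt (fun i : Fin 4 => if hi : (i : ℕ) < t then x ⟨i, hi⟩ else 0)
        (fun i : Fin 4 => if hi : (i : ℕ) < t then y ⟨i, hi⟩ else 0) = cnt x y := by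
  unfold cnt
  rw [← Finset.card_image_of_injective
      (Finset.univ.filter fun i : Fin t => (x i = 1 ∧ y i = 2) ∨ (x i = 2 ∧ y i = 1))
      (Fin.castLE_injective h)]
  congr 1
  ext i
  simp only [Finset.mem_image, Finset.mem_filter, Finset.mem_univ, true_and]
  constructor
  · intro hi
    have hlt : (i : ℕ) < t := by
      by_contra hn
      rw [dif_neg hn, dif_neg hn] at hi
      rcases hi with ⟨h1, _⟩ | ⟨h1, _⟩ <;> exact absurd h1 (by decide)
    rw [dif_pos hlt, dif_pos hlt] at hi
    exact ⟨⟨(i : ℕ), hlt⟩, hi, rfl⟩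
  · rintro ⟨j, hj, rfl⟩
    rw [dif_pos (show ((Fin.castLE h j : Fin 4) : ℕ) < t from j.2),
        dif_pos (show ((Fin.castLE h j : Fin 4) : ℕ) < t from j.2)]
    exact hj

instance : DecidableRel (triangularGraph 5).Adj := fun a b =>
  inferInstanceAs (Decidable (a ≠ b ∧ (a.1 ∩ b.1).Nonempty))

lemma common_nbr : ∀ u v : V5, u ≠ v → ¬(u.1 ∩ v.1).Nonempty →
    ∃ w : V5, (triangularGraph 5).Adj u w ∧ (triangularGraph 5).Adj w v := by
  decide

lemma dist_eq (u v : V5) : (triangularGraph 5).dist u v =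
    if u = v then 0 else if (u.1 ∩ v.1).Nonempty then 1 else 2 := by
  split_ifs with h1 h2
  · subst h1; exact SimpleGraph.dist_self
  · exact SimpleGraph.dist_eq_one_iff_adj.mpr ⟨h1, h2⟩
  · obtain ⟨w, hw1, hw2⟩ := common_nbr u v h1 h2
    have hle : (triangularGraph 5).dist u v ≤ 2 :=
      SimpleGraph.dist_le (.cons hw1 (.cons hw2 .nil))
    have h0 : 0 < (triangularGraph 5).dist u v :=
      SimpleGraph.Reachable.pos_dist_of_ne ⟨.cons hw1 (.cons hw2 .nil)⟩ h1
    have hne1 : (triangularGraph 5).dist u v ≠ 1 := fun hd =>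
      h2 (SimpleGraph.dist_eq_one_iff_adj.mp hd).2
    omega
def w01 : V5 := ⟨{0, 1}, by decide⟩
def w02 : V5 := ⟨{0, 2}, by decide⟩
def w03 : V5 := ⟨{0, 3}, by decide⟩
def w04 : V5 := ⟨{0, 4}, by decide⟩
def w12 : V5 := ⟨{1, 2}, by decide⟩
def w13 : V5 := ⟨{1, 3}, by decide⟩
def w14 : V5 := ⟨{1, 4}, by decide⟩
def w23 : V5 := ⟨{2, 3}, by decide⟩
def w24 : V5 := ⟨{2, 4}, by decide⟩
def w34 : V5 := ⟨{3, 4}, by decide⟩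

def LT : List T4 := [(0, 0, 0, 0), (0, 0, 0, 1), (0, 0, 0, 2), (0, 0, 1, 0), (0, 0, 1, 1), (0, 0, 1, 2), (0, 0, 2, 0), (0, 0, 2, 1), (0, 0, 2, 2), (0, 1, 0, 0), (0, 1, 0, 1), (0, 1, 0, 2), (0, 1, 1, 0), (0, 1, 1, 1), (0, 1, 1, 2), (0, 1, 2, 0), (0, 1, 2, 1), (0, 1, 2, 2), (0, 2, 0, 0), (0, 2, 0, 1), (0, 2, 0, 2), (0, 2, 1, 0), (0, 2, 1, 1), (0, 2, 1, 2), (0, 2, 2, 0), (0, 2, 2, 1), (0, 2, 2, 2), (1, 0, 0, 0), (1, 0, 0, 1), (1, 0, 0, 2), (1, 0, 1, 0), (1, 0, 1, 1), (1, 0, 1, 2), (1, 0, 2, 0), (1, 0, 2, 1), (1, 0, 2, 2), (1, 1, 0, 0), (1, 1, 0, 1), (1, 1, 0, 2), (1, 1, 1, 0), (1, 1, 1, 1), (1, 1, 1, 2), (1, 1, 2, 0), (1, 1, 2, 1), (1, 1, 2, 2), (1, 2, 0, 0), (1, 2, 0, 1), (1, 2, 0, 2), (1, 2, 1, 0), (1,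 2, 1, 1), (1, 2, 1, 2), (1, 2, 2, 0), (1, 2, 2, 1), (1, 2, 2, 2), (2, 0, 0, 0), (2, 0, 0, 1), (2, 0, 0, 2), (2, 0, 1, 0), (2, 0, 1, 1), (2, 0, 1, 2), (2, 0, 2, 0), (2, 0, 2, 1), (2, 0, 2, 2), (2, 1, 0, 0), (2, 1, 0, 1), (2, 1, 0, 2), (2, 1, 1, 0), (2, 1, 1, 1), (2, 1, 1, 2), (2, 1, 2, 0), (2, 1, 2, 1), (2, 1, 2, 2), (2, 2, 0, 0), (2, 2, 0, 1), (2, 2, 0, 2), (2, 2, 1, 0), (2, 2, 1, 1), (2, 2, 1, 2), (2, 2, 2, 0), (2, 2, 2, 1), (2, 2, 2, 2)]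

lemma mem_LT : ∀ p : T4, p ∈ LT := by decide

lemma root0 : ¬ (∃ a1 ∈ LT, cntT ((0, 0, 0, 0) : T4) a1 = 2 ∧ ∃ a2 ∈ LT, cntT ((0, 0, 0, 0) : T4) a2 = 1 ∧ cntT a1 a2 = 2 ∧ ∃ a3 ∈ LT, cntT ((0, 0, 0, 0) : T4) a3 = 1 ∧ cntT a1 a3 = 2 ∧ cntT a2 a3 = 1 ∧ ∃ a4 ∈ LT, cntT ((0, 0, 0, 0) : T4) a4 = 2 ∧ cntT a1 a4 = 1 ∧ cntT a2 a4 = 1 ∧ cntT a3 a4 = 1 ∧ ∃ a5 ∈ LT, cntT ((0, 0, 0, 0) : T4) a5 = 2 ∧ cntT a1 a5 = 1 ∧ cntT a2 a5 = 1 ∧ cntT a3 a5 = 1 ∧ cntT a4 a5 = 1 ∧ ∃ a6 ∈ LT, cntT ((0, 0, 0, 0) : T4) a6 = 1 ∧ cntT a1 a6 = 1 ∧ cntT a2 a6 = 2 ∧ cntT a3 a6 = 1 ∧ cntT a4 a6 = 2 ∧ cntT a5 a6 = 1 ∧ ∃ a7 ∈ LT, cntT ((0, 0, 0, 0) : T4)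 a7 = 1 ∧ cntT a1 a7 = 1 ∧ cntT a2 a7 = 1 ∧ cntT a3 a7 = 2 ∧ cntT a4 a7 = 2 ∧ cntT a5 a7 = 1 ∧ cntT a6 a7 = 1 ∧ ∃ a8 ∈ LT, cntT ((0, 0, 0, 0) : T4) a8 = 1 ∧ cntT a1 a8 = 1 ∧ cntT a2 a8 = 2 ∧ cntT a3 a8 = 1 ∧ cntT a4 a8 = 1 ∧ cntT a5 a8 = 2 ∧ cntT a6 a8 = 1 ∧ cntT a7 a8 = 2 ∧ ∃ a9 ∈ LT, cntT ((0, 0, 0, 0) : T4) a9 = 1 ∧ cntT a1 a9 = 1 ∧ cntT a2 a9 = 1 ∧ cntT a3 a9 = 2 ∧ cntT a4 a9 = 1 ∧ cntT a5 a9 = 2 ∧ cntT a6 a9 = 2 ∧ cntT a7 a9 = 1 ∧ cntT a8 a9 = 1) := by decide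

lemma root1 : ¬ (∃ a1 ∈ LT, cntT ((1, 0, 0, 0) : T4) a1 = 2 ∧ ∃ a2 ∈ LT, cntT ((1, 0, 0, 0) : T4) a2 = 1 ∧ cntT a1 a2 = 2 ∧ ∃ a3 ∈ LT, cntT ((1, 0, 0, 0) : T4) a3 = 1 ∧ cntT a1 a3 = 2 ∧ cntT a2 a3 = 1 ∧ ∃ a4 ∈ LT, cntT ((1, 0, 0, 0) : T4) a4 = 2 ∧ cntT a1 a4 = 1 ∧ cntT a2 a4 = 1 ∧ cntT a3 a4 = 1 ∧ ∃ a5 ∈ LT, cntT ((1, 0, 0, 0) : T4) a5 = 2 ∧ cntT a1 a5 = 1 ∧ cntT a2 a5 = 1 ∧ cntT a3 a5 = 1 ∧ cntT a4 a5 = 1 ∧ ∃ a6 ∈ LT, cntT ((1, 0, 0, 0) : T4) a6 = 1 ∧ cntT a1 a6 = 1 ∧ cntT a2 a6 = 2 ∧ cntT a3 a6 = 1 ∧ cntT a4 a6 = 2 ∧ cntT a5 a6 = 1 ∧ ∃ a7 ∈ LT, cntT ((1, 0, 0, 0) : T4) a7 = 1 ∧ cntT a1 a7 = 1 ∧ cntT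 a2 a7 = 1 ∧ cntT a3 a7 = 2 ∧ cntT a4 a7 = 2 ∧ cntT a5 a7 = 1 ∧ cntT a6 a7 = 1 ∧ ∃ a8 ∈ LT, cntT ((1, 0, 0, 0) : T4) a8 = 1 ∧ cntT a1 a8 = 1 ∧ cntT a2 a8 = 2 ∧ cntT a3 a8 = 1 ∧ cntT a4 a8 = 1 ∧ cntT a5 a8 = 2 ∧ cntT a6 a8 = 1 ∧ cntT a7 a8 = 2 ∧ ∃ a9 ∈ LT, cntT ((1, 0, 0, 0) : T4) a9 = 1 ∧ cntT a1 a9 = 1 ∧ cntT a2 a9 = 1 ∧ cntT a3 a9 = 2 ∧ cntT a4 a9 = 1 ∧ cntT a5 a9 = 2 ∧ cntT a6 a9 = 2 ∧ cntT a7 a9 = 1 ∧ cntT a8 a9 = 1) := by decide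

lemma root2 : ¬ (∃ a1 ∈ LT, cntT ((1, 1, 0, 0) : T4) a1 = 2 ∧ ∃ a2 ∈ LT, cntT ((1, 1, 0, 0) : T4) a2 = 1 ∧ cntT a1 a2 = 2 ∧ ∃ a3 ∈ LT, cntT ((1, 1, 0, 0) : T4) a3 = 1 ∧ cntT a1 a3 = 2 ∧ cntT a2 a3 = 1 ∧ ∃ a4 ∈ LT, cntT ((1, 1, 0, 0) : T4) a4 = 2 ∧ cntT a1 a4 = 1 ∧ cntT a2 a4 = 1 ∧ cntT a3 a4 = 1 ∧ ∃ a5 ∈ LT, cntT ((1, 1, 0, 0) : T4) a5 = 2 ∧ cntT a1 a5 = 1 ∧ cntT a2 a5 = 1 ∧ cntT a3 a5 = 1 ∧ cntT a4 a5 = 1 ∧ ∃ a6 ∈ LT, cntT ((1, 1, 0, 0) : T4) a6 = 1 ∧ cntT a1 a6 = 1 ∧ cntT a2 a6 = 2 ∧ cntT a3 a6 = 1 ∧ cntT a4 a6 = 2 ∧ cntT a5 a6 = 1 ∧ ∃ a7 ∈ LT, cntT ((1, 1, 0, 0) : T4) a7 = 1 ∧ cntT a1 a7 = 1 ∧ cntT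 a2 a7 = 1 ∧ cntT a3 a7 = 2 ∧ cntT a4 a7 = 2 ∧ cntT a5 a7 = 1 ∧ cntT a6 a7 = 1 ∧ ∃ a8 ∈ LT, cntT ((1, 1, 0, 0) : T4) a8 = 1 ∧ cntT a1 a8 = 1 ∧ cntT a2 a8 = 2 ∧ cntT a3 a8 = 1 ∧ cntT a4 a8 = 1 ∧ cntT a5 a8 = 2 ∧ cntT a6 a8 = 1 ∧ cntT a7 a8 = 2 ∧ ∃ a9 ∈ LT, cntT ((1, 1, 0, 0) : T4) a9 = 1 ∧ cntT a1 a9 = 1 ∧ cntT a2 a9 = 1 ∧ cntT a3 a9 = 2 ∧ cntT a4 a9 = 1 ∧ cntT a5 a9 = 2 ∧ cntT a6 a9 = 2 ∧ cntT a7 a9 = 1 ∧ cntT a8 a9 = 1) := by decide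

lemma root3 : ¬ (∃ a1 ∈ LT, cntT ((1, 1, 1, 0) : T4) a1 = 2 ∧ ∃ a2 ∈ LT, cntT ((1, 1, 1, 0) : T4) a2 = 1 ∧ cntT a1 a2 = 2 ∧ ∃ a3 ∈ LT, cntT ((1, 1, 1, 0) : T4) a3 = 1 ∧ cntT a1 a3 = 2 ∧ cntT a2 a3 = 1 ∧ ∃ a4 ∈ LT, cntT ((1, 1, 1, 0) : T4) a4 = 2 ∧ cntT a1 a4 = 1 ∧ cntT a2 a4 = 1 ∧ cntT a3 a4 = 1 ∧ ∃ a5 ∈ LT, cntT ((1, 1, 1, 0) : T4) a5 = 2 ∧ cntT a1 a5 = 1 ∧ cntT a2 a5 = 1 ∧ cntT a3 a5 = 1 ∧ cntT a4 a5 = 1 ∧ ∃ a6 ∈ LT, cntT ((1, 1, 1, 0) : T4) a6 = 1 ∧ cntT a1 a6 = 1 ∧ cntT a2 a6 = 2 ∧ cntT a3 a6 = 1 ∧ cntT a4 a6 = 2 ∧ cntT a5 a6 = 1 ∧ ∃ a7 ∈ LT, cntT ((1, 1, 1, 0) : T4) a7 = 1 ∧ cntT a1 a7 = 1 ∧ cntT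 a2 a7 = 1 ∧ cntT a3 a7 = 2 ∧ cntT a4 a7 = 2 ∧ cntT a5 a7 = 1 ∧ cntT a6 a7 = 1 ∧ ∃ a8 ∈ LT, cntT ((1, 1, 1, 0) : T4) a8 = 1 ∧ cntT a1 a8 = 1 ∧ cntT a2 a8 = 2 ∧ cntT a3 a8 = 1 ∧ cntT a4 a8 = 1 ∧ cntT a5 a8 = 2 ∧ cntT a6 a8 = 1 ∧ cntT a7 a8 = 2 ∧ ∃ a9 ∈ LT, cntT ((1, 1, 1, 0) : T4) a9 = 1 ∧ cntT a1 a9 = 1 ∧ cntT a2 a9 = 1 ∧ cntT a3 a9 = 2 ∧ cntT a4 a9 = 1 ∧ cntT a5 a9 = 2 ∧ cntT a6 a9 = 2 ∧ cntT a7 a9 = 1 ∧ cntT a8 a9 = 1) := by decide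

lemma root4 : ¬ (∃ a1 ∈ LT, cntT ((1, 1, 1, 1) : T4) a1 = 2 ∧ ∃ a2 ∈ LT, cntT ((1, 1, 1, 1) : T4) a2 = 1 ∧ cntT a1 a2 = 2 ∧ ∃ a3 ∈ LT, cntT ((1, 1, 1, 1) : T4) a3 = 1 ∧ cntT a1 a3 = 2 ∧ cntT a2 a3 = 1 ∧ ∃ a4 ∈ LT, cntT ((1, 1, 1, 1) : T4) a4 = 2 ∧ cntT a1 a4 = 1 ∧ cntT a2 a4 = 1 ∧ cntT a3 a4 = 1 ∧ ∃ a5 ∈ LT, cntT ((1, 1, 1, 1) : T4) a5 = 2 ∧ cntT a1 a5 = 1 ∧ cntT a2 a5 = 1 ∧ cntT a3 a5 = 1 ∧ cntT a4 a5 = 1 ∧ ∃ a6 ∈ LT, cntT ((1, 1, 1, 1) : T4) a6 = 1 ∧ cntT a1 a6 = 1 ∧ cntT a2 a6 = 2 ∧ cntT a3 a6 = 1 ∧ cntT a4 a6 = 2 ∧ cntT a5 a6 = 1 ∧ ∃ a7 ∈ LT, cntT ((1, 1, 1, 1) : T4) a7 = 1 ∧ cntT a1 a7 = 1 ∧ cntT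 a2 a7 = 1 ∧ cntT a3 a7 = 2 ∧ cntT a4 a7 = 2 ∧ cntT a5 a7 = 1 ∧ cntT a6 a7 = 1 ∧ ∃ a8 ∈ LT, cntT ((1, 1, 1, 1) : T4) a8 = 1 ∧ cntT a1 a8 = 1 ∧ cntT a2 a8 = 2 ∧ cntT a3 a8 = 1 ∧ cntT a4 a8 = 1 ∧ cntT a5 a8 = 2 ∧ cntT a6 a8 = 1 ∧ cntT a7 a8 = 2 ∧ ∃ a9 ∈ LT, cntT ((1, 1, 1, 1) : T4) a9 = 1 ∧ cntT a1 a9 = 1 ∧ cntT a2 a9 = 1 ∧ cntT a3 a9 = 2 ∧ cntT a4 a9 = 1 ∧ cntT a5 a9 = 2 ∧ cntT a6 a9 = 2 ∧ cntT a7 a9 = 1 ∧ cntT a8 a9 = 1) := by decide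

lemma main : ¬ (∃ a0 ∈ canonT, ∃ a1 ∈ LT, cntT a0 a1 = 2 ∧ ∃ a2 ∈ LT, cntT a0 a2 = 1 ∧ cntT a1 a2 = 2 ∧ ∃ a3 ∈ LT, cntT a0 a3 = 1 ∧ cntT a1 a3 = 2 ∧ cntT a2 a3 = 1 ∧ ∃ a4 ∈ LT, cntT a0 a4 = 2 ∧ cntT a1 a4 = 1 ∧ cntT a2 a4 = 1 ∧ cntT a3 a4 = 1 ∧ ∃ a5 ∈ LT, cntT a0 a5 = 2 ∧ cntT a1 a5 = 1 ∧ cntT a2 a5 = 1 ∧ cntT a3 a5 = 1 ∧ cntT a4 a5 = 1 ∧ ∃ a6 ∈ LT, cntT a0 a6 = 1 ∧ cntT a1 a6 = 1 ∧ cntT a2 a6 = 2 ∧ cntT a3 a6 = 1 ∧ cntT a4 a6 = 2 ∧ cntT a5 a6 = 1 ∧ ∃ a7 ∈ LT, cntT a0 a7 = 1 ∧ cntT a1 a7 = 1 ∧ cntT a2 a7 = 1 ∧ cntT a3 a7 = 2 ∧ cntT a4 a7 = 2 ∧ cntT a5 a7 = 1 ∧ cntT a6 a7 = 1 ∧ ∃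 a8 ∈ LT, cntT a0 a8 = 1 ∧ cntT a1 a8 = 1 ∧ cntT a2 a8 = 2 ∧ cntT a3 a8 = 1 ∧ cntT a4 a8 = 1 ∧ cntT a5 a8 = 2 ∧ cntT a6 a8 = 1 ∧ cntT a7 a8 = 2 ∧ ∃ a9 ∈ LT, cntT a0 a9 = 1 ∧ cntT a1 a9 = 1 ∧ cntT a2 a9 = 1 ∧ cntT a3 a9 = 2 ∧ cntT a4 a9 = 1 ∧ cntT a5 a9 = 2 ∧ cntT a6 a9 = 2 ∧ cntT a7 a9 = 1 ∧ cntT a8 a9 = 1) := by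
  rintro ⟨a0, hmem, h⟩
  simp only [canonT, List.mem_cons, List.not_mem_nil, or_false] at hmem
  rcases hmem with rfl | rfl | rfl | rfl | rfl
  · exact root0 h
  · exact root1 h
  · exact root2 h
  · exact root3 h
  · exact root4 h

def F6 : V5 → Fin 6 → Fin 3 := fun v =>
  if v.1 = {0, 1} then ![1, 2, 0, 0, 0, 1] else
  if v.1 = {1, 4} then ![2, 0, 2, 0, 2, 0] else
  if v.1 = {2, 3} then ![2, 1, 1, 2, 1, 0] else
  if v.1 = {0, 4} then ![2, 2, 2, 2, 1, 0] else
  if v.1 = {1, 2} then ![2, 0, 1, 0, 2, 0] else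
  if v.1 = {0, 2} then ![2, 2, 1, 2, 1, 0] else
  if v.1 = {1, 3} then ![1, 1, 0, 0, 0, 1] else
  if v.1 = {0, 3} then ![1, 0, 0, 2, 1, 2] else
  if v.1 = {2, 4} then ![2, 0, 0, 1, 1, 2] else
  ![2, 1, 2, 2, 1, 0]

lemma F6_addr : IsAddressing (triangularGraph 5) F6 := by
  have key : ∀ u v : V5, (if u = v then 0 else if (u.1 ∩ v.1).Nonempty then 1 else 2)
      = (Finset.univ.filter fun i =>
          (F6 u i = 1 ∧ F6 v i = 2) ∨ (F6 u i = 2 ∧ F6 v i = 1)).card := by decide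
  intro u v
  exact (dist_eq u v).trans (key u v)

lemma lower_lemma (t : ℕ) (f : V5 → Fin t → Fin 3)
    (hf : IsAddressing (triangularGraph 5) f) : 5 ≤ t := by
  by_contra hlt
  push_neg at hlt
  have ht : t ≤ 4 := by omega
  let g : V5 → A4 := fun v => fun i : Fin 4 => if hi : (i : ℕ) < t then f v ⟨i, hi⟩ else 0
  have hcnt : ∀ u v : V5, (triangularGraph 5).dist u v = cnt (g u) (g v) :=
    fun u v => (hf u v).trans (cnt_pad ht (f u) (f v)).symm
  obtain ⟨σ, tb, hmem⟩ := canon_ex (g w01)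
  have hd : ∀ u v : V5, cntT (pmap σ tb (g u)) (pmap σ tb (g v)) =
      (if u = v then 0 else if (u.1 ∩ v.1).Nonempty then 1 else 2) :=
    fun u v => (pmap_cnt σ tb (g u) (g v)).trans ((hcnt u v).symm.trans (dist_eq u v))
  exact main ⟨pmap σ tb (g w01), hmem, ⟨pmap σ tb (g w24), mem_LT _, (hd w01 w24).trans (by decide), ⟨pmap σ tb (g w13), mem_LT _, (hd w01 w13).trans (by decide), (hd w24 w13).trans (by decide), ⟨pmap σ tb (g w03), mem_LT _, (hd w01 w03).trans (by decide), (hd w24 w03).trans (by decide), (hd w13 w03).trans (by decide), ⟨pmap σ tb (g w34), mem_LT _, (hd w01 w34).trans (by decide), (hd w24 w34).trans (by decide), (hd w13 w34).trans (by decide), (hd w03 w34).trans (by decide), ⟨pmap σ tb (g w23), mem_LT _, (hd w01 w23).trans (by decide), (hd w24 w23).trans (by decide), (hd w13 w23).trans (by decide), (hd w03 w23).trans (by decide), (hd w34 w23).trans (by decide), ⟨pmap σ tb (g w02), mem_LT _, (hd w01 w02).trans (by decide), (hd w24 w02).trans (by decide), (hd w13 w02).trans (by decide), (hd w03 w02).trans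 (by decide), (hd w34 w02).trans (by decide), (hd w23 w02).trans (by decide), ⟨pmap σ tb (g w12), mem_LT _, (hd w01 w12).trans (by decide), (hd w24 w12).trans (by decide), (hd w13 w12).trans (by decide), (hd w03 w12).trans (by decide), (hd w34 w12).trans (by decide), (hd w23 w12).trans (by decide), (hd w02 w12).trans (by decide), ⟨pmap σ tb (g w04), mem_LT _, (hd w01 w04).trans (by decide), (hd w24 w04).trans (by decide), (hd w13 w04).trans (by decide), (hd w03 w04).trans (by decide), (hd w34 w04).trans (by decide), (hd w23 w04).trans (by decide), (hd w02 w04).trans (by decide), (hd w12 w04).trans (by decide), ⟨pmap σ tb (g w14), mem_LT _, (hd w01 w14).trans (by decide), (hd w24 w14).trans (by decide), (hd w13 w14).trans (by decide), (hd w03 w14).trans (by decide), (hd w34 w14).trans (by decide), (hd w23 w14).trans (by decide), (hd w02 w14).trans (by decide), (hd w12 w14).trans (by decide), (hd w04 w14).trans (by decide)⟩⟩⟩⟩⟩⟩⟩⟩⟩⟩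

end T5Aux

open T5Aux in
/-- `5 ≤ N(T₅) ≤ 6`: the triangular graph `T₅` (the complement of the
Petersen graph) admits an addressing of length `6`, and admits no addressing of length `4`
or less. -/
theorem t5_bounds :
    (∃ f : {s : Finset (Fin 5) // s.card = 2} → Fin 6 → Fin 3,
        IsAddressing (triangularGraph 5) f) ∧
      (∀ (t : ℕ) (f : {s : Finset (Fin 5) // s.card = 2} → Fin t → Fin 3),
        IsAddressing (triangularGraph 5) f → 5 ≤ t) ∧
      5 ≤ graphN (triangularGraph 5) ∧ graphN (triangularGraph 5) ≤ 6 := by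
  have upper : ∃ f : {s : Finset (Fin 5) // s.card = 2} → Fin 6 → Fin 3,
      IsAddressing (triangularGraph 5) f := ⟨F6, F6_addr⟩
  refine ⟨upper, fun t f hf => lower_lemma t f hf, ?_, ?_⟩
  · exact le_csInf ⟨6, upper⟩ fun b hb => by
      obtain ⟨f, hf⟩ := hb
      exact lower_lemma b f hf
  · exact csInf_le (OrderBot.bddBelow _) upper
end
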